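/- Let H be a complex Hilbert space and suppose A, B are bounded self-adjoint operators with orthogonal decompositions into spectral parts as follows: projections p⁻, p, p⁺ for A and q⁻, q, q⁺ for B summing to the identity, such that ‖γ(A|_{ran p}) − γ(B|_{ran q})‖ < δ (as operators extended by zero), ‖p⁻ − q⁻‖ < δ, ‖p⁺ − q⁺‖ < δ, ‖γ(A|_{ran p⁺}) − p⁺‖ < δ, ‖γ(B|_{ran q⁺}) − q⁺‖ < δ, ‖γ(A|_{ran p⁻}) + p⁻‖ < δ, and ‖γ(B|_{ran q⁻}) + q⁻‖ < δ. Then ‖γ(A) − γ(B)‖ < 7δ. -/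

import Mathlib

/-! Inserting `± pm`, `± qm`, `± pp`, `± qp` splits `γ(A) - γ(B)` into seven differences,
each of norm `< δ` by one hypothesis; the triangle inequality does the rest. -/

theorem norm_add₃_sub_add₃_lt_seven_mul {E : Type*} [SeminormedAddCommGroup E] {δ : ℝ}
    {am a' ap bm b' bp pm pp qm qp : E}
    (hmid : ‖a' - b'‖ < δ) (hpm : ‖pm - qm‖ < δ) (hpp : ‖pp - qp‖ < δ)
    (hap : ‖ap - pp‖ < δ) (hbp : ‖bp - qp‖ < δ)
    (ham : ‖am + pm‖ < δ) (hbm : ‖bm + qm‖ < δ) :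
    ‖(am + a' + ap) - (bm + b' + bp)‖ < 7 * δ :=
  calc ‖(am + a' + ap) - (bm + b' + bp)‖
      = ‖(am + pm) - (bm + qm) - (pm - qm) + (a' - b') + (ap - pp) - (bp - qp) + (pp - qp)‖ := by
        congr 1; abel
    _ ≤ ‖am + pm‖ + ‖bm + qm‖ + ‖pm - qm‖ + ‖a' - b'‖ + ‖ap - pp‖ + ‖bp - qp‖ + ‖pp - qp‖ := by
        grw [norm_add_le, norm_sub_le, norm_add_le, norm_add_le, norm_sub_le, norm_sub_le]
    _ < 7 * δ := by linarith

theorem norm_gamma_sub_gamma_lt_seven_delta_general {H : Type*} [NormedAddCommGroup H]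
    [InnerProductSpace ℂ H] [CompleteSpace H] (A B : H →L[ℂ] H)
    (δ : ℝ)
    (Am A' Ap Bm B' Bp pm pp qm qp : H →L[ℂ] H)
    (hdecA : cfc (fun t : ℝ => t / Real.sqrt (1 + t ^ 2)) A = Am + A' + Ap)
    (hdecB : cfc (fun t : ℝ => t / Real.sqrt (1 + t ^ 2)) B = Bm + B' + Bp)
    (hmid : ‖A' - B'‖ < δ)
    (hpm : ‖pm - qm‖ < δ) (hpp : ‖pp - qp‖ < δ)
    (hAp : ‖Ap - pp‖ < δ) (hBp : ‖Bp - qp‖ < δ)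
    (hAm : ‖Am + pm‖ < δ) (hBm : ‖Bm + qm‖ < δ) :
    ‖cfc (fun t : ℝ => t / Real.sqrt (1 + t ^ 2)) A -
        cfc (fun t : ℝ => t / Real.sqrt (1 + t ^ 2)) B‖ < 7 * δ := by
  rw [hdecA, hdecB]
  exact norm_add₃_sub_add₃_lt_seven_mul hmid hpm hpp hAp hBp hAm hBm

/-- The key `7δ`-estimate: if the bounded transforms `γ(A)`, `γ(B)` of bounded
self-adjoint operators `A`, `B` decompose as sums of `γ` applied to their three spectral
parts (each extended by zero), the middle parts are `δ`-close, the outer projections are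
`δ`-close, and each outer part is `δ`-close to `±` the corresponding projection, then
`‖γ(A) - γ(B)‖ < 7δ`. -/
theorem norm_gamma_sub_gamma_lt_seven_delta {H : Type*} [NormedAddCommGroup H]
    [InnerProductSpace ℂ H] [CompleteSpace H] (A B : H →L[ℂ] H)
    (hA : IsSelfAdjoint A) (hB : IsSelfAdjoint B) (δ : ℝ)
    (Am A' Ap Bm B' Bp pm pp qm qp : H →L[ℂ] H)
    (hdecA : cfc (fun t : ℝ => t / Real.sqrt (1 + t ^ 2)) A = Am + A' + Ap)
    (hdecB : cfc (fun t : ℝ => t / Real.sqrt (1 + t ^ 2)) B = Bm + B' + Bp)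
    (hmid : ‖A' - B'‖ < δ)
    (hpm : ‖pm - qm‖ < δ) (hpp : ‖pp - qp‖ < δ)
    (hAp : ‖Ap - pp‖ < δ) (hBp : ‖Bp - qp‖ < δ)
    (hAm : ‖Am + pm‖ < δ) (hBm : ‖Bm + qm‖ < δ) :
    ‖cfc (fun t : ℝ => t / Real.sqrt (1 + t ^ 2)) A -
        cfc (fun t : ℝ => t / Real.sqrt (1 + t ^ 2)) B‖ < 7 * δ :=
  norm_gamma_sub_gamma_lt_seven_delta_general A B δ Am A' Ap Bm B' Bp pm pp qm qp hdecA hdecB hmid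
    hpm hpp hAp hBp hAm hBm
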